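/- arXiv:1907.04050 — 7 statements merged into one kernel-verified Lean document; each statement's English description precedes it below -/
import Mathlib

section
/- Let ν be a probability measure on a measurable space X, y₁,…,y_k points of Y, c : X × Y → ℝ a nonnegative measurable cost, and g ∈ ℝ^k with measurable Laguerre cells L_j(g) satisfying ν(⋃_j L_j(g)) = 1. Then the measure γ* = ∑_j (ν restricted to L_j(g)) ⊗ δ_{y_j} on X × Y is a coupling of ν and the discrete measure ∑_j ν(L_j(g)) δ_{y_j}, and its transport cost equals ∫_{X×Y} c dγ* = ∑_j ∫_{L_j(g)} c(x, y_j) dν(x). -/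
open MeasureTheory ENNReal

/-! The Laguerre cells are pairwise disjoint and cover `ν`-almost everything, so the restrictions
`ν|_{L j}` add up to `ν`. Each summand `ν|_{L j} ⊗ δ_{y j}` is the push-forward of `ν|_{L j}`
along `x ↦ (x, y j)`, so marginals and cost can be computed summand by summand. -/

section Laguerre

variable {ι X Y : Type*}

def laguerreCell (c : X × Y → ℝ) (y : ι → Y) (g : ι → ℝ) (j : ι) : Set X :=
  {x | ∀ m, m ≠ j → c (x, y j) - g j < c (x, y m) - g m}

theorem pairwise_disjoint_laguerreCell (c : X × Y → ℝ) (y : ι → Y) (g : ι → ℝ) :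
    Pairwise (Function.onFun Disjoint (laguerreCell c y g)) :=
  fun i j hij ↦ Set.disjoint_left.2 fun _ hi hj ↦ (hi j hij.symm).asymm (hj i hij)

end Laguerre

namespace MeasureTheory.Measure

variable {ι X Y : Type*} [MeasurableSpace X] [MeasurableSpace Y]

theorem sum_restrict_eq_self_of_ae_mem_iUnion [Fintype ι] {μ : Measure X} {s : ι → Set X}
    (hd : Pairwise (Function.onFun Disjoint s)) (hs : ∀ i, MeasurableSet (s i))
    (hcover : ∀ᵐ x ∂μ, x ∈ ⋃ i, s i) :
    ∑ i, μ.restrict (s i) = μ := by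
  rw [← sum_fintype, ← restrict_iUnion hd hs]
  exact restrict_eq_self_of_ae_mem hcover

section SumProdDirac

variable [Fintype ι] (μ : ι → Measure X) (y : ι → Y)

theorem map_fst_sum_prod_dirac :
    (∑ i, (μ i).prod (dirac (y i))).map Prod.fst = ∑ i, μ i := by
  simp only [map_finset_sum' measurable_fst.aemeasurable, map_fst_prod, measure_univ, one_smul]

theorem map_snd_sum_prod_dirac :
    (∑ i, (μ i).prod (dirac (y i))).map Prod.snd = ∑ i, μ i Set.univ • dirac (y i) := by
  simp only [map_finset_sum' measurable_snd.aemeasurable, map_snd_prod]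

theorem lintegral_sum_prod_dirac [∀ i, SFinite (μ i)] {f : X × Y → ℝ≥0∞} (hf : Measurable f) :
    ∫⁻ p, f p ∂(∑ i, (μ i).prod (dirac (y i))) = ∑ i, ∫⁻ x, f (x, y i) ∂μ i := by
  simp only [lintegral_finsetSum_measure, prod_dirac, lintegral_map hf measurable_prodMk_right]

end SumProdDirac

end MeasureTheory.Measure

theorem laguerre_coupling_is_coupling_and_cost_general
    {X Y : Type*} [MeasurableSpace X] [MeasurableSpace Y] {k : ℕ}
    (ν : Measure X) [IsProbabilityMeasure ν]
    (y : Fin k → Y)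
    (c : X × Y → ℝ) (hc_meas : Measurable c)
    (g : Fin k → ℝ)
    (L : Fin k → Set X)
    (hL : ∀ j, L j = {x : X | ∀ m, m ≠ j → c (x, y j) - g j < c (x, y m) - g m})
    (hL_meas : ∀ j, MeasurableSet (L j))
    (hL_full : ν (⋃ j, L j) = 1)
    (γstar : Measure (X × Y))
    (hγstar : γstar = ∑ j, (ν.restrict (L j)).prod (Measure.dirac (y j))) :
    IsProbabilityMeasure γstar ∧
    γstar.map Prod.fst = ν ∧
    γstar.map Prod.snd = ∑ j, ν (L j) • Measure.dirac (y j) ∧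
    ∫⁻ p, ENNReal.ofReal (c p) ∂γstar
      = ∑ j, ∫⁻ x in L j, ENNReal.ofReal (c (x, y j)) ∂ν := by
  have hL_disj : Pairwise (Function.onFun Disjoint L) := by
    rw [show L = laguerreCell c y g from funext hL]
    exact pairwise_disjoint_laguerreCell c y g
  have hcover : ∀ᵐ x ∂ν, x ∈ ⋃ j, L j :=
    (mem_ae_iff_prob_eq_one (MeasurableSet.iUnion hL_meas)).2 hL_full
  have hfst : γstar.map Prod.fst = ν := by
    rw [hγstar, Measure.map_fst_sum_prod_dirac,
      Measure.sum_restrict_eq_self_of_ae_mem_iUnion hL_disj hL_meas hcover]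
  refine ⟨?_, hfst, ?_, ?_⟩
  · exact (Measure.isProbabilityMeasure_map_iff measurable_fst.aemeasurable).1
      (hfst ▸ inferInstance)
  · simp only [hγstar, Measure.map_snd_sum_prod_dirac, Measure.restrict_apply_univ]
  · rw [hγstar, Measure.lintegral_sum_prod_dirac _ _ hc_meas.ennreal_ofReal]

/-- If the Laguerre cells carry all the mass of `ν`, then
`γ* = ∑ j, (ν restricted to L j) ⊗ δ_{y j}` is a coupling of `ν` and the discrete
measure `∑ j, ν (L j) • δ_{y j}`, and its transport cost is
`∑ j, ∫_{L j} c (x, y j) dν`. -/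
theorem laguerre_coupling_is_coupling_and_cost
    {X Y : Type*} [MeasurableSpace X] [MeasurableSpace Y] {k : ℕ}
    (ν : Measure X) [IsProbabilityMeasure ν]
    (y : Fin k → Y)
    (c : X × Y → ℝ) (hc_meas : Measurable c) (hc_nonneg : ∀ p, 0 ≤ c p)
    (g : Fin k → ℝ)
    (L : Fin k → Set X)
    (hL : ∀ j, L j = {x : X | ∀ m, m ≠ j → c (x, y j) - g j < c (x, y m) - g m})
    (hL_meas : ∀ j, MeasurableSet (L j))
    (hL_full : ν (⋃ j, L j) = 1)
    (γstar : Measure (X × Y))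
    (hγstar : γstar = ∑ j, (ν.restrict (L j)).prod (Measure.dirac (y j))) :
    IsProbabilityMeasure γstar ∧
    γstar.map Prod.fst = ν ∧
    γstar.map Prod.snd = ∑ j, ν (L j) • Measure.dirac (y j) ∧
    ∫⁻ p, ENNReal.ofReal (c p) ∂γstar
      = ∑ j, ∫⁻ x in L j, ENNReal.ofReal (c (x, y j)) ∂ν :=
  laguerre_coupling_is_coupling_and_cost_general ν y c hc_meas g L hL hL_meas hL_full γstar hγstar
end

section
/- Let ν be a probability measure on a measurable space X, y₁,…,y_k points of Y, w₁,…,w_k nonnegative reals summing to 1, μ = ∑_j w_j δ_{y_j}, c : X × Y → ℝ a nonnegative measurable cost, and g ∈ ℝ^k with measurable Laguerre cells L_j(g) satisfying ν(L_j(g)) = w_j for every j and ν(⋃_j L_j(g)) = 1. Then ∫_X g^c(x) dν(x) + ∑_j g_j w_j = ∑_j ∫_{L_j(g)} c(x, y_j) dν(x), i.e., the dual objective at g equals the transport cost of the Laguerre-cell coupling. -/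
open MeasureTheory ENNReal

/-- If the Laguerre cells `L j (g)` satisfy `ν (L j) = w j` and carry
all the mass of `ν`, then the dual objective at `g` equals the transport cost of the
Laguerre-cell coupling:
`∫ g^c dν + ∑ j, g j * w j = ∑ j, ∫_{L j} c (x, y j) dν`. -/
theorem dual_objective_eq_laguerre_transport_cost
    {X Y : Type*} [MeasurableSpace X] {k : ℕ}
    (ν : Measure X) [IsProbabilityMeasure ν]
    (y : Fin k → Y)
    (c : X × Y → ℝ) (hc_meas : ∀ j, Measurable fun x => c (x, y j))
    (hc_nonneg : ∀ p, 0 ≤ c p)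
    (w : Fin k → ℝ) (hw_nonneg : ∀ j, 0 ≤ w j) (hw_sum : ∑ j, w j = 1)
    (g : Fin k → ℝ)
    (L : Fin k → Set X)
    (hL : ∀ j, L j = {x : X | ∀ m, m ≠ j → c (x, y j) - g j < c (x, y m) - g m})
    (hL_meas : ∀ j, MeasurableSet (L j))
    (hL_weight : ∀ j, ν (L j) = ENNReal.ofReal (w j))
    (hL_full : ν (⋃ j, L j) = 1)
    (hgc_int : Integrable (fun x => ⨅ m, (c (x, y m) - g m)) ν) :
    (∫ x, (⨅ m, (c (x, y m) - g m)) ∂ν) + ∑ j, g j * w j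
      = ∑ j, ∫ x in L j, c (x, y j) ∂ν := by
  rcases Nat.eq_zero_or_pos k with hk | hk
  · subst hk
    simp at hL_full
  have : Nonempty (Fin k) := ⟨⟨0, hk⟩⟩
  set f : X → ℝ := fun x => ⨅ m, (c (x, y m) - g m) with hf
  -- on L j, f = c (x, y j) - g j
  have hfL : ∀ j, ∀ x ∈ L j, f x = c (x, y j) - g j := by
    intro j x hx
    rw [hL j] at hx
    refine le_antisymm (ciInf_le (Set.Finite.bddBelow (Set.finite_range _)) j) ?_
    refine le_ciInf fun m => ?_
    rcases eq_or_ne m j with rfl | hm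
    · exact le_rfl
    · exact (hx m hm).le
  -- cells pairwise disjoint
  have hdisj : Pairwise (Function.onFun Disjoint L) := by
    intro i j hij
    show Disjoint (L i) (L j); rw [Set.disjoint_left]
    intro x hxi hxj
    have h1 := (hL i ▸ hxi) j (Ne.symm hij)
    have h2 := (hL j ▸ hxj) i hij
    linarith
  -- complement of union is null
  have hcompl : ν (⋃ j, L j)ᶜ = 0 := by
    rw [measure_compl (MeasurableSet.iUnion hL_meas) (measure_ne_top ν _), hL_full,
      measure_univ, tsub_self]
  have hUae : (⋃ j, L j) =ᵐ[ν] (Set.univ : Set X) := Filter.eventuallyEq_univ.mpr hcompl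
  -- integrability of c(·, y j) on L j
  have hint : ∀ j, IntegrableOn (fun x => c (x, y j)) (L j) ν := by
    intro j
    have h1 : IntegrableOn (fun x => f x + g j) (L j) ν :=
      (hgc_int.integrableOn).add (integrable_const _)
    exact h1.congr_fun (fun x hx => by show f x + g j = c (x, y j); rw [hfL j x hx]; ring) (hL_meas j)
  have key : ∫ x, f x ∂ν = ∑ j, ((∫ x in L j, c (x, y j) ∂ν) - g j * w j) := by
    calc ∫ x, f x ∂ν = ∫ x in Set.univ, f x ∂ν := setIntegral_univ.symm
      _ = ∫ x in ⋃ j, L j, f x ∂ν := (setIntegral_congr_set hUae).symm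
      _ = ∑ j, ∫ x in L j, f x ∂ν := by
          rw [integral_iUnion_fintype hL_meas hdisj (fun j => hgc_int.integrableOn)]
      _ = ∑ j, ((∫ x in L j, c (x, y j) ∂ν) - g j * w j) := by
          refine Finset.sum_congr rfl fun j _ => ?_
          rw [setIntegral_congr_fun (hL_meas j) (fun x hx => hfL j x hx),
            integral_sub (hint j) (integrable_const _), setIntegral_const,
            measureReal_def, hL_weight j, ENNReal.toReal_ofReal (hw_nonneg j), smul_eq_mul, mul_comm]
  rw [key, Finset.sum_sub_distrib]
  ring
end

section
/- (Theorem 1 of the paper: optimal semi-discrete transport maps are restrictions to Laguerre cells.) Let ν be a probability measure on a measurable space X, y₁,…,y_k points of Y, w₁,…,w_k nonnegative reals summing to 1, μ = ∑_j w_j δ_{y_j}, and c : X × Y → ℝ a nonnegative measurable cost. Suppose g ∈ ℝ^k is such that the Laguerre cells L_j(g) are measurable, ν(L_j(g)) = w_j for every j, and ν(⋃_j L_j(g)) = 1. Then the coupling γ* = ∑_j (ν restricted to L_j(g)) ⊗ δ_{y_j} is an optimal coupling of ν and μ: for every coupling γ of ν and μ, ∫ c dγ ≥ ∫ c dγ*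 = ∑_j ∫_{L_j(g)} c(x, y_j) dν(x). Consequently the optimal stochastic transport map from y_j is the normalized restriction of ν to L_j(g). -/
open MeasureTheory ENNReal

section Aux
variable {X Y : Type*} [MeasurableSpace X] [MeasurableSpace Y]

lemma aux_lintegral_prod_dirac (μ : Measure X) [SFinite μ] (b : Y) {f : X × Y → ℝ≥0∞}
    (hf : Measurable f) :
    ∫⁻ p, f p ∂(μ.prod (Measure.dirac b)) = ∫⁻ x, f (x, b) ∂μ := by
  rw [Measure.prod_dirac, lintegral_map hf measurable_prodMk_right]

lemma aux_measurable_inf' {ι : Type*} {s : Finset ι} (hs : s.Nonempty) {f : ι → X → ℝ≥0∞}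
    (hf : ∀ n ∈ s, Measurable (f n)) : Measurable (s.inf' hs f) :=
  Finset.inf'_induction hs _ (fun _f hf _g hg => hf.inf hg) fun n hn => hf n hn

lemma aux_eq_prod_dirac (η : Measure (X × Y)) [IsFiniteMeasure η] (b : Y)
    (h : ∀ S : Set Y, MeasurableSet S → b ∉ S → η (Set.univ ×ˢ S) = 0) :
    η = (η.map Prod.fst).prod (Measure.dirac b) := by
  haveI : IsFiniteMeasure (η.map Prod.fst) :=
    ⟨by rw [Measure.map_apply measurable_fst .univ]; exact measure_lt_top _ _⟩
  refine (Measure.prod_eq ?_).symm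
  intro s t hs ht
  rw [Measure.map_apply measurable_fst hs]
  by_cases hb : b ∈ t
  · rw [Measure.dirac_apply' _ ht, Set.indicator_of_mem hb, Pi.one_apply, mul_one]
    have h1 : Prod.fst ⁻¹' s = (s ×ˢ t) ∪ (s ×ˢ tᶜ) := by
      rw [← Set.prod_union, Set.union_compl_self, Set.prod_univ]
    have h2 : η (s ×ˢ tᶜ) = 0 :=
      le_antisymm (le_trans (measure_mono (Set.prod_mono_left (Set.subset_univ s)))
        (le_of_eq (h tᶜ ht.compl (by simpa)))) zero_le
    rw [h1]
    refine le_antisymm (measure_mono Set.subset_union_left) ?_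
    exact le_trans (measure_union_le _ _) (by rw [h2, add_zero])
  · rw [Measure.dirac_apply' _ ht, Set.indicator_of_notMem hb, mul_zero]
    exact le_antisymm (le_trans (measure_mono (Set.prod_mono_left (Set.subset_univ s)))
      (le_of_eq (h t ht hb))) zero_le

end Aux

/-- (Theorem 1 of the paper.) If the Laguerre cells `L j (g)` are
measurable, satisfy `ν (L j) = w j` and carry all the mass of `ν`, then the coupling
`γ* = ∑ j, (ν restricted to L j) ⊗ δ_{y j}` is an optimal coupling of `ν` and
`μ = ∑ j, w j • δ_{y j}`: every coupling `γ` of `ν` and `μ` satisfies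
`∫ c dγ ≥ ∫ c dγ* = ∑ j, ∫_{L j} c (x, y j) dν`. -/
theorem optimal_semidiscrete_transport_is_laguerre_restriction
    {X Y : Type*} [MeasurableSpace X] [MeasurableSpace Y] {k : ℕ}
    (ν : Measure X) [IsProbabilityMeasure ν]
    (y : Fin k → Y)
    (w : Fin k → ℝ≥0∞) (hw_sum : ∑ j, w j = 1)
    (μ : Measure Y) (hμ : μ = ∑ j, w j • Measure.dirac (y j))
    (c : X × Y → ℝ) (hc_meas : Measurable c) (hc_nonneg : ∀ p, 0 ≤ c p)
    (g : Fin k → ℝ)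
    (L : Fin k → Set X)
    (hL : ∀ j, L j = {x : X | ∀ m, m ≠ j → c (x, y j) - g j < c (x, y m) - g m})
    (hL_meas : ∀ j, MeasurableSet (L j))
    (hL_weight : ∀ j, ν (L j) = w j)
    (hL_full : ν (⋃ j, L j) = 1)
    (γstar : Measure (X × Y))
    (hγstar : γstar = ∑ j, (ν.restrict (L j)).prod (Measure.dirac (y j))) :
    IsProbabilityMeasure γstar ∧
    γstar.map Prod.fst = ν ∧
    γstar.map Prod.snd = μ ∧
    (∫⁻ p, ENNReal.ofReal (c p) ∂γstar
        = ∑ j, ∫⁻ x in L j, ENNReal.ofReal (c (x, y j)) ∂ν) ∧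
    (∀ γ : Measure (X × Y), IsProbabilityMeasure γ →
      γ.map Prod.fst = ν → γ.map Prod.snd = μ →
      ∫⁻ p, ENNReal.ofReal (c p) ∂γ ≥ ∫⁻ p, ENNReal.ofReal (c p) ∂γstar) := by
  classical
  have hk : Nonempty (Fin k) := by
    rcases Nat.eq_zero_or_pos k with h0 | h0
    · subst h0; simp at hw_sum
    · exact ⟨⟨0, h0⟩⟩
  have hne : (Finset.univ : Finset (Fin k)).Nonempty := Finset.univ_nonempty
  -- cells are pairwise disjoint
  have hdisj : Pairwise (Function.onFun Disjoint L) := by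
    intro j m hjm
    rw [Function.onFun, Set.disjoint_left]
    intro x hxj hxm
    have h1 := (hL j ▸ hxj : x ∈ {x : X | ∀ n, n ≠ j → c (x, y j) - g j < c (x, y n) - g n}) m
      (Ne.symm hjm)
    have h2 := (hL m ▸ hxm : x ∈ {x : X | ∀ n, n ≠ m → c (x, y m) - g m < c (x, y n) - g n}) j hjm
    linarith
  have hU : MeasurableSet (⋃ j, L j) := MeasurableSet.iUnion hL_meas
  have hUc : ν (⋃ j, L j)ᶜ = 0 := by
    rw [measure_compl hU (measure_ne_top _ _), hL_full, measure_univ, tsub_self]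
  have wfin : ∀ j, w j ≠ ∞ := by
    intro j
    refine ne_top_of_le_ne_top one_ne_top ?_
    rw [← hw_sum]
    exact Finset.single_le_sum (fun i _ => zero_le) (Finset.mem_univ j)
  -- the shifted potential Φ
  set G : ℝ := Finset.univ.sup' hne g with hGdef
  have hgG : ∀ j, g j ≤ G := fun j => Finset.le_sup' g (Finset.mem_univ j)
  set Φ : X → ℝ≥0∞ :=
    fun x => Finset.univ.inf' hne (fun m => ENNReal.ofReal (c (x, y m) + (G - g m))) with hΦdef
  have hΦmeas : Measurable Φ := by
    have h := aux_measurable_inf' (X := X) hne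
      (f := fun m x => ENNReal.ofReal (c (x, y m) + (G - g m)))
      (fun n _ => ((hc_meas.comp measurable_prodMk_right).add_const _).ennreal_ofReal)
    have : Φ = Finset.univ.inf' hne (fun m x => ENNReal.ofReal (c (x, y m) + (G - g m))) := by
      funext x
      rw [hΦdef, Finset.inf'_apply]
    rw [this]
    exact h
  have hK1 : ∀ x m, Φ x ≤ ENNReal.ofReal (c (x, y m)) + ENNReal.ofReal (G - g m) := by
    intro x m
    rw [← ENNReal.ofReal_add (hc_nonneg _) (sub_nonneg.2 (hgG m))]
    exact Finset.inf'_le _ (Finset.mem_univ m)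
  have hK2 : ∀ j, ∀ x ∈ L j,
      Φ x = ENNReal.ofReal (c (x, y j)) + ENNReal.ofReal (G - g j) := by
    intro j x hx
    rw [← ENNReal.ofReal_add (hc_nonneg _) (sub_nonneg.2 (hgG j))]
    refine le_antisymm (Finset.inf'_le _ (Finset.mem_univ j)) (Finset.le_inf' _ _ ?_)
    intro m _
    refine ENNReal.ofReal_le_ofReal ?_
    by_cases hm : m = j
    · subst hm; exact le_refl _
    · have := (hL j ▸ hx : x ∈ {x : X | ∀ n, n ≠ j → c (x, y j) - g j < c (x, y n) - g n}) m hm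
      linarith
  -- integral of Φ against ν decomposes along the cells
  have hAj : ∀ j, ∫⁻ x in L j, Φ x ∂ν
      = ∫⁻ x in L j, ENNReal.ofReal (c (x, y j)) ∂ν + ENNReal.ofReal (G - g j) * w j := by
    intro j
    rw [setLIntegral_congr_fun (hL_meas j) (fun x hx => hK2 j x hx)]
    rw [lintegral_add_right _ measurable_const, setLIntegral_const, hL_weight]
  have hsumΦ : ∑ j, ∫⁻ x in L j, Φ x ∂ν = ∫⁻ x, Φ x ∂ν := by
    have h1 : ∫⁻ x, Φ x ∂ν
        = ∫⁻ x in ⋃ j, L j, Φ x ∂ν + ∫⁻ x in (⋃ j, L j)ᶜ, Φ x ∂ν :=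
      (lintegral_add_compl Φ hU).symm
    rw [h1, setLIntegral_measure_zero _ _ hUc, add_zero, lintegral_iUnion hL_meas hdisj,
      tsum_fintype]
  -- part 1: probability measure
  have h1 : IsProbabilityMeasure γstar := by
    constructor
    rw [hγstar, Measure.finset_sum_apply]
    have : ∀ j : Fin k, ((ν.restrict (L j)).prod (Measure.dirac (y j))) Set.univ = w j := by
      intro j
      rw [← Set.univ_prod_univ, Measure.prod_prod, Measure.restrict_apply_univ, hL_weight,
        measure_univ, mul_one]
    simp only [this]
    exact hw_sum
  -- part 2: first marginal
  have h2 : γstar.map Prod.fst = ν := by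
    refine Measure.ext fun A hA => ?_
    rw [Measure.map_apply measurable_fst hA, hγstar, Measure.finset_sum_apply]
    have hterm : ∀ j : Fin k,
        ((ν.restrict (L j)).prod (Measure.dirac (y j))) (Prod.fst ⁻¹' A) = ν (A ∩ L j) := by
      intro j
      have : Prod.fst ⁻¹' A = A ×ˢ (Set.univ : Set Y) := by
        ext q; simp
      rw [this, Measure.prod_prod, measure_univ, mul_one, Measure.restrict_apply hA]
    simp only [hterm]
    have hsum : ∑ j, ν (A ∩ L j) = ν (A ∩ ⋃ j, L j) := by
      rw [Set.inter_iUnion, measure_iUnion ?_ (fun j => hA.inter (hL_meas j)), tsum_fintype]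
      intro j m hjm
      exact (hdisj hjm).mono Set.inter_subset_right Set.inter_subset_right
    rw [hsum]
    refine le_antisymm (measure_mono Set.inter_subset_left) ?_
    calc ν A = ν ((A ∩ ⋃ j, L j) ∪ (A ∩ (⋃ j, L j)ᶜ)) := by
          rw [← Set.inter_union_distrib_left, Set.union_compl_self, Set.inter_univ]
      _ ≤ ν (A ∩ ⋃ j, L j) + ν (A ∩ (⋃ j, L j)ᶜ) := measure_union_le _ _
      _ ≤ ν (A ∩ ⋃ j, L j) + 0 := by
          exact add_le_add (le_refl _) (le_trans (measure_mono Set.inter_subset_right) hUc.le)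
      _ = ν (A ∩ ⋃ j, L j) := add_zero _
  -- part 3: second marginal
  have h3 : γstar.map Prod.snd = μ := by
    refine Measure.ext fun S hS => ?_
    rw [Measure.map_apply measurable_snd hS, hγstar, Measure.finset_sum_apply, hμ,
      Measure.finset_sum_apply]
    refine Finset.sum_congr rfl fun j _ => ?_
    have : Prod.snd ⁻¹' S = (Set.univ : Set X) ×ˢ S := by ext q; simp
    rw [this, Measure.prod_prod, Measure.restrict_apply_univ, hL_weight, Measure.smul_apply,
      smul_eq_mul]
  -- part 4: cost of γstar
  have h4 : ∫⁻ p, ENNReal.ofReal (c p) ∂γstar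
      = ∑ j, ∫⁻ x in L j, ENNReal.ofReal (c (x, y j)) ∂ν := by
    rw [hγstar, lintegral_finset_sum_measure]
    exact Finset.sum_congr rfl fun j _ =>
      aux_lintegral_prod_dirac _ _ (hc_meas.ennreal_ofReal)
  -- key identity (A)
  have hA : (∑ j, ∫⁻ x in L j, ENNReal.ofReal (c (x, y j)) ∂ν)
      + ∑ j, ENNReal.ofReal (G - g j) * w j = ∫⁻ x, Φ x ∂ν := by
    rw [← Finset.sum_add_distrib, ← hsumΦ]
    exact Finset.sum_congr rfl fun j _ => (hAj j).symm
  refine ⟨h1, h2, h3, h4, ?_⟩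
  -- part 5: optimality
  intro γ hγp hγfst hγsnd
  set E : Fin k → Fin k → Prop :=
    fun j m => ∀ S : Set Y, MeasurableSet S → (y j ∈ S ↔ y m ∈ S) with hEdef
  have hErefl : ∀ j, E j j := fun j S _ => Iff.rfl
  have hEsymm : ∀ {j m}, E j m → E m j := fun h S hS => (h S hS).symm
  have hEtrans : ∀ {j m n}, E j m → E m n → E j n := fun h1 h2 S hS => (h1 S hS).trans (h2 S hS)
  have hclassne : ∀ j : Fin k, (Finset.univ.filter (fun m => E j m)).Nonempty :=
    fun j => ⟨j, Finset.mem_filter.2 ⟨Finset.mem_univ j, hErefl j⟩⟩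
  have hfilter_eq : ∀ {j m}, E j m →
      Finset.univ.filter (fun n => E j n) = Finset.univ.filter (fun n => E m n) := by
    intro j m h
    ext n
    simp only [Finset.mem_filter, Finset.mem_univ, true_and]
    exact ⟨fun h' => hEtrans (hEsymm h) h', fun h' => hEtrans h h'⟩
  set ρ : Fin k → Fin k :=
    fun j => (Finset.univ.filter (fun m => E j m)).min' (hclassne j) with hρdef
  have hρmem : ∀ j, E j (ρ j) := fun j =>
    (Finset.mem_filter.1 (Finset.min'_mem _ (hclassne j))).2
  have hρ_eq : ∀ {j m}, E j m → ρ j = ρ m := by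
    intro j m h
    have hfe := hfilter_eq h
    refine le_antisymm (Finset.min'_le _ _ (hfe ▸ Finset.min'_mem _ (hclassne m)))
      (Finset.min'_le _ _ (hfe.symm ▸ Finset.min'_mem _ (hclassne j)))
  have hρρ : ∀ j, ρ (ρ j) = ρ j := fun j => (hρ_eq (hρmem j)).symm
  -- c cannot distinguish measurably indistinguishable points
  have hEc : ∀ {j m}, E j m → ∀ x, c (x, y j) = c (x, y m) := by
    intro j m h x
    have hf : Measurable (fun y' => c (x, y')) := hc_meas.comp measurable_prodMk_left
    have := (h ((fun y' => c (x, y')) ⁻¹' {c (x, y j)})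
      (hf (measurableSet_singleton _))).1 rfl
    exact (Set.mem_singleton_iff.1 this).symm
  -- Laguerre cells of dominated indices in a class are empty
  have hLempty : ∀ {j m}, E j m → m ≠ j → g j ≤ g m → w j = 0 := by
    intro j m h hmj hg
    rw [← hL_weight j]
    have : L j = ∅ := by
      rw [hL j]
      ext x
      simp only [Set.mem_setOf_eq, Set.mem_empty_iff_false, iff_false, not_forall]
      refine ⟨m, hmj, ?_⟩
      rw [not_lt, ← hEc h x]
      linarith
    rw [this, measure_empty]
  -- separating sets
  have hsep : ∀ j m, ¬ E j m → ∃ S : Set Y, MeasurableSet S ∧ y j ∈ S ∧ y m ∉ S := by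
    intro j m h
    obtain ⟨S, hfail⟩ := not_forall.1 h
    obtain ⟨hS, hiff⟩ := Classical.not_imp.1 hfail
    by_cases hj : y j ∈ S
    · exact ⟨S, hS, hj, fun hm => hiff ⟨fun _ => hm, fun _ => hj⟩⟩
    · have hm : y m ∈ S := by
        by_contra hm
        exact hiff ⟨fun h' => absurd h' hj, fun h' => absurd h' hm⟩
      exact ⟨Sᶜ, hS.compl, hj, by simp [hm]⟩
  choose! Sep hSepMeas hSepIn hSepOut using hsep
  set T : Fin k → Fin k → Set Y :=
    fun j m => if E j m then Set.univ else (if j < m then Sep j m else (Sep m j)ᶜ) with hTdef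
  have hTmeas : ∀ j m, MeasurableSet (T j m) := by
    intro j m
    simp only [hTdef]
    split_ifs with h1 h2
    · exact MeasurableSet.univ
    · exact hSepMeas j m h1
    · exact (hSepMeas m j (fun h' => h1 (hEsymm h'))).compl
  have hTj : ∀ j m, y j ∈ T j m := by
    intro j m
    simp only [hTdef]
    split_ifs with h1 h2
    · trivial
    · exact hSepIn j m h1
    · exact hSepOut m j (fun h' => h1 (hEsymm h'))
  have hTm : ∀ j m, ¬ E j m → y m ∉ T j m := by
    intro j m h
    simp only [hTdef, if_neg h]
    split_ifs with h2
    · exact hSepOut j m h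
    · simp only [Set.mem_compl_iff, not_not]
      exact hSepIn m j (fun h' => h (hEsymm h'))
  have hTanti : ∀ j m, ¬ E j m → T m j = (T j m)ᶜ := by
    intro j m h
    have h' : ¬ E m j := fun h2 => h (hEsymm h2)
    have hjm : j ≠ m := fun hh => h (hh ▸ hErefl j)
    simp only [hTdef, if_neg h, if_neg h']
    rcases lt_or_gt_of_ne hjm with hlt | hgt
    · rw [if_pos hlt, if_neg (asymm hlt)]
    · rw [if_neg (asymm hgt), if_pos hgt, compl_compl]
  set B : Fin k → Set Y := fun p => ⋂ m, T p m with hBdef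
  have hBmeas : ∀ p, MeasurableSet (B p) := fun p => MeasurableSet.iInter fun m => hTmeas p m
  have hyB : ∀ p j, y j ∈ B p ↔ E p j := by
    intro p j
    constructor
    · intro hmem
      by_contra h
      exact hTm p j h (Set.mem_iInter.1 hmem j)
    · intro h
      exact Set.mem_iInter.2 fun m => (h _ (hTmeas p m)).1 (hTj p m)
  have hBdisj : ∀ p q, ¬ E p q → Disjoint (B p) (B q) := by
    intro p q h
    rw [Set.disjoint_left]
    intro a hap haq
    have h1 : a ∈ T p q := Set.mem_iInter.1 hap q
    have h2 : a ∈ T q p := Set.mem_iInter.1 haq p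
    rw [hTanti p q h] at h2
    exact h2 h1
  set reps : Finset (Fin k) := Finset.univ.filter (fun p => ρ p = p) with hrepsdef
  have hρreps : ∀ j, ρ j ∈ reps := fun j =>
    Finset.mem_filter.2 ⟨Finset.mem_univ _, hρρ j⟩
  have hjρ : ∀ j, y j ∈ B (ρ j) := fun j => (hyB _ _).2 (hEsymm (hρmem j))
  have hfiber : ∀ p ∈ reps, ∀ j, (y j ∈ B p ↔ ρ j = p) := by
    intro p hp j
    rw [hyB]
    constructor
    · intro h
      rw [hρ_eq (hEsymm h)]
      exact (Finset.mem_filter.1 hp).2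
    · intro h
      exact hEsymm (h ▸ hρmem j)
  -- μ of measurable sets
  have hμS : ∀ S : Set Y, MeasurableSet S →
      μ S = ∑ j, w j * S.indicator 1 (y j) := by
    intro S hS
    rw [hμ, Measure.finset_sum_apply]
    refine Finset.sum_congr rfl fun j _ => ?_
    rw [Measure.smul_apply, Measure.dirac_apply' _ hS, smul_eq_mul]
  have hμBp_out : ∀ p ∈ reps, ∀ S : Set Y, MeasurableSet S → y p ∉ S → μ (S ∩ B p) = 0 := by
    intro p hp S hS hyp
    rw [hμS _ (hS.inter (hBmeas p))]
    refine Finset.sum_eq_zero fun j _ => ?_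
    rw [Set.indicator_of_notMem, mul_zero]
    rintro ⟨hjS, hjB⟩
    have hEpj : E p j := (hyB p j).1 hjB
    exact hyp ((hEpj S hS).2 hjS)
  have hμBp_tot : ∀ p ∈ reps,
      μ (B p) = ∑ j ∈ Finset.univ.filter (fun j => ρ j = p), w j := by
    intro p hp
    rw [hμS _ (hBmeas p), Finset.sum_filter]
    refine Finset.sum_congr rfl fun j _ => ?_
    by_cases h : ρ j = p
    · rw [if_pos h, Set.indicator_of_mem ((hfiber p hp j).2 h), Pi.one_apply, mul_one]
    · rw [if_neg h, Set.indicator_of_notMem (fun hmem => h ((hfiber p hp j).1 hmem)), mul_zero]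
  -- γ of preimages
  have hγS : ∀ S : Set Y, MeasurableSet S → γ (Prod.snd ⁻¹' S) = μ S := by
    intro S hS
    rw [← hγsnd, Measure.map_apply measurable_snd hS]
  set U2 : Set Y := ⋃ p ∈ reps, B p with hU2def
  have hU2meas : MeasurableSet U2 := by
    exact MeasurableSet.biUnion (Finset.countable_toSet reps) (fun p _ => hBmeas p)
  have hμU2c : μ U2ᶜ = 0 := by
    rw [hμS _ hU2meas.compl]
    refine Finset.sum_eq_zero fun j _ => ?_
    rw [Set.indicator_of_notMem, mul_zero]
    simp only [Set.mem_compl_iff, not_not]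
    exact Set.mem_biUnion (hρreps j) (hjρ j)
  -- decomposition of lintegrals over γ
  have hdecomp : ∀ f : X × Y → ℝ≥0∞, Measurable f →
      ∫⁻ q, f q ∂γ = ∑ p ∈ reps, ∫⁻ q in Prod.snd ⁻¹' B p, f q ∂γ := by
    intro f hf
    have h1 : ∫⁻ q, f q ∂γ
        = ∫⁻ q in Prod.snd ⁻¹' U2, f q ∂γ + ∫⁻ q in (Prod.snd ⁻¹' U2)ᶜ, f q ∂γ :=
      (lintegral_add_compl f (measurable_snd hU2meas)).symm
    have h2 : ∫⁻ q in (Prod.snd ⁻¹' U2)ᶜ, f q ∂γ = 0 := by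
      refine setLIntegral_measure_zero _ _ ?_
      rw [← Set.preimage_compl]
      rw [hγS _ hU2meas.compl]
      exact hμU2c
    have h3 : (Prod.snd ⁻¹' U2 : Set (X × Y)) = ⋃ p ∈ reps, Prod.snd ⁻¹' B p := by
      rw [hU2def]
      simp [Set.preimage_iUnion]
    rw [h1, h2, add_zero, h3, lintegral_biUnion_finset ?_ (fun p _ => measurable_snd (hBmeas p)) f]
    intro p hp q hq hpq
    have hp' : ρ p = p := (Finset.mem_filter.1 (Finset.mem_coe.1 hp)).2
    have hq' : ρ q = q := (Finset.mem_filter.1 (Finset.mem_coe.1 hq)).2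
    have hEpq : ¬ E p q := fun hE => hpq (by rw [← hp', ← hq']; exact hρ_eq hE)
    exact (hBdisj p q hEpq).preimage _
  -- class-level sup of g
  set gh : Fin k → ℝ :=
    fun j => (Finset.univ.filter (fun m => E j m)).sup' (hclassne j) g with hghdef
  have hgh_eq : ∀ {j m}, E j m → gh j = gh m := by
    intro j m h
    have hfe := hfilter_eq h
    simp only [hghdef]
    refine le_antisymm (Finset.sup'_le _ _ fun n hn => Finset.le_sup' g (hfe ▸ hn))
      (Finset.sup'_le _ _ fun n hn => Finset.le_sup' g (hfe.symm ▸ hn))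
  have hgh_self : ∀ j, g j ≤ gh j := fun j =>
    Finset.le_sup' g (Finset.mem_filter.2 ⟨Finset.mem_univ j, hErefl j⟩)
  have hgh_attained : ∀ j, ∃ m, E j m ∧ gh j = g m := by
    intro j
    obtain ⟨m, hm, hmeq⟩ := Finset.exists_mem_eq_sup' (hclassne j) g
    exact ⟨m, (Finset.mem_filter.1 hm).2, hmeq⟩
  have hgh_G : ∀ j, gh j ≤ G := by
    intro j
    obtain ⟨m, _, hmeq⟩ := hgh_attained j
    rw [hmeq]
    exact hgG m
  have hgh_w : ∀ j, w j ≠ 0 → g j = gh j := by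
    intro j hw
    refine le_antisymm (hgh_self j) ?_
    by_contra hlt
    push_neg at hlt
    obtain ⟨m, hEm, hmeq⟩ := hgh_attained j
    have hmj : m ≠ j := by
      intro hh
      rw [hh] at hmeq
      rw [hmeq] at hlt
      exact lt_irrefl _ hlt
    exact hw (hLempty hEm hmj (by rw [← hmeq]; exact hlt.le))
  -- per-class inequality
  have hclass : ∀ p ∈ reps,
      ∫⁻ q in Prod.snd ⁻¹' B p, Φ q.1 ∂γ
        ≤ ∫⁻ q in Prod.snd ⁻¹' B p, ENNReal.ofReal (c q) ∂γ
          + ENNReal.ofReal (G - gh p) * μ (B p) := by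
    intro p hp
    set η : Measure (X × Y) := γ.restrict (Prod.snd ⁻¹' B p) with hηdef
    haveI : IsFiniteMeasure η := by
      constructor
      rw [hηdef, Measure.restrict_apply_univ]
      exact measure_lt_top γ _
    have hηprod : η = (η.map Prod.fst).prod (Measure.dirac (y p)) := by
      refine aux_eq_prod_dirac η (y p) ?_
      intro S hS hyp
      rw [hηdef, Measure.restrict_apply (MeasurableSet.univ.prod hS)]
      have : (Set.univ : Set X) ×ˢ S ∩ Prod.snd ⁻¹' B p = Prod.snd ⁻¹' (S ∩ B p) := by
        ext q; simp
      rw [this, hγS _ (hS.inter (hBmeas p)), hμBp_out p hp S hS hyp]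
    haveI : IsFiniteMeasure (η.map Prod.fst) :=
      ⟨by rw [Measure.map_apply measurable_fst .univ]; exact measure_lt_top _ _⟩
    have hmass : (η.map Prod.fst) Set.univ = μ (B p) := by
      rw [Measure.map_apply measurable_fst .univ, Set.preimage_univ, hηdef,
        Measure.restrict_apply_univ]
      rw [hγS _ (hBmeas p)]
    have hc_int : ∫⁻ q in Prod.snd ⁻¹' B p, ENNReal.ofReal (c q) ∂γ
        = ∫⁻ x, ENNReal.ofReal (c (x, y p)) ∂(η.map Prod.fst) := by
      calc ∫⁻ q in Prod.snd ⁻¹' B p, ENNReal.ofReal (c q) ∂γ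
          = ∫⁻ q, ENNReal.ofReal (c q) ∂η := rfl
        _ = ∫⁻ q, ENNReal.ofReal (c q) ∂((η.map Prod.fst).prod (Measure.dirac (y p))) := by
            rw [← hηprod]
        _ = ∫⁻ x, ENNReal.ofReal (c (x, y p)) ∂(η.map Prod.fst) :=
            aux_lintegral_prod_dirac _ _ (hc_meas.ennreal_ofReal)
    have hΦ_int : ∫⁻ q in Prod.snd ⁻¹' B p, Φ q.1 ∂γ = ∫⁻ x, Φ x ∂(η.map Prod.fst) := by
      calc ∫⁻ q in Prod.snd ⁻¹' B p, Φ q.1 ∂γ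
          = ∫⁻ q, Φ q.1 ∂η := rfl
        _ = ∫⁻ q, Φ q.1 ∂((η.map Prod.fst).prod (Measure.dirac (y p))) := by rw [← hηprod]
        _ = ∫⁻ x, Φ x ∂(η.map Prod.fst) :=
            aux_lintegral_prod_dirac _ _ (hΦmeas.comp measurable_fst)
    have hpt : ∀ x, Φ x ≤ ENNReal.ofReal (c (x, y p)) + ENNReal.ofReal (G - gh p) := by
      intro x
      obtain ⟨m, hEm, hmeq⟩ := hgh_attained p
      rw [hmeq, hEc hEm x]
      exact hK1 x m
    calc ∫⁻ q in Prod.snd ⁻¹' B p, Φ q.1 ∂γ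
        = ∫⁻ x, Φ x ∂(η.map Prod.fst) := hΦ_int
      _ ≤ ∫⁻ x, (ENNReal.ofReal (c (x, y p)) + ENNReal.ofReal (G - gh p)) ∂(η.map Prod.fst) :=
          lintegral_mono hpt
      _ = ∫⁻ x, ENNReal.ofReal (c (x, y p)) ∂(η.map Prod.fst)
          + ENNReal.ofReal (G - gh p) * (η.map Prod.fst) Set.univ := by
          rw [lintegral_add_right _ measurable_const, lintegral_const]
      _ = ∫⁻ q in Prod.snd ⁻¹' B p, ENNReal.ofReal (c q) ∂γ
          + ENNReal.ofReal (G - gh p) * μ (B p) := by rw [hc_int, hmass]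
  -- summing the per-class inequalities
  have hB5 : ∫⁻ x, Φ x ∂ν
      ≤ ∫⁻ q, ENNReal.ofReal (c q) ∂γ + ∑ p ∈ reps, ENNReal.ofReal (G - gh p) * μ (B p) := by
    have hΦγ : ∫⁻ x, Φ x ∂ν = ∑ p ∈ reps, ∫⁻ q in Prod.snd ⁻¹' B p, Φ q.1 ∂γ := by
      rw [← hγfst, lintegral_map hΦmeas measurable_fst,
        hdecomp (fun q => Φ q.1) (hΦmeas.comp measurable_fst)]
    rw [hΦγ, hdecomp _ (hc_meas.ennreal_ofReal), ← Finset.sum_add_distrib]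
    exact Finset.sum_le_sum fun p hp => hclass p hp
  -- rewriting the class weights
  have hwt : ∑ p ∈ reps, ENNReal.ofReal (G - gh p) * μ (B p)
      = ∑ j, ENNReal.ofReal (G - g j) * w j := by
    rw [← Finset.sum_fiberwise_of_maps_to (fun j _ => hρreps j)
      (fun j => ENNReal.ofReal (G - g j) * w j)]
    refine Finset.sum_congr rfl fun p hp => ?_
    rw [hμBp_tot p hp, Finset.mul_sum]
    refine Finset.sum_congr rfl fun j hj => ?_
    have hρj : ρ j = p := (Finset.mem_filter.1 hj).2
    by_cases hw : w j = 0
    · rw [hw, mul_zero, mul_zero]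
    · congr 1
      rw [hgh_w j hw]
      have : gh j = gh p := hgh_eq (hρj ▸ hρmem j)
      rw [this]
  -- finiteness of the shift term
  have hT_ne : (∑ j, ENNReal.ofReal (G - g j) * w j) ≠ ∞ := by
    refine (ENNReal.sum_lt_top.2 fun j _ => ?_).ne
    exact ENNReal.mul_lt_top ENNReal.ofReal_lt_top (wfin j).lt_top
  -- conclusion
  rw [ge_iff_le, h4]
  have hfin : (∑ j, ∫⁻ x in L j, ENNReal.ofReal (c (x, y j)) ∂ν)
      + ∑ j, ENNReal.ofReal (G - g j) * w j
      ≤ ∫⁻ q, ENNReal.ofReal (c q) ∂γ + ∑ j, ENNReal.ofReal (G - g j) * w j := by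
    rw [hA, ← hwt]
    exact hB5
  exact (ENNReal.add_le_add_iff_right hT_ne).1 hfin
end

section
/- Let ν be a probability measure on a measurable space X, y₁,…,y_k points of Y, and c : X × Y → ℝ a nonnegative measurable cost, with measurable Voronoi cells V_j satisfying ν(⋃_j V_j) = 1. Then the measure γ* = ∑_j (ν restricted to V_j) ⊗ δ_{y_j} is a coupling of ν and the discrete measure μ̂ = ∑_j ν(V_j) δ_{y_j}, and its cost equals ∫ c dγ* = ∑_j ∫_{V_j} c(x, y_j) dν(x) = ∫_X min_j c(x, y_j) dν(x). -/
open MeasureTheory ENNReal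

/-- If the Voronoi cells carry all the mass of `ν`, then
`γ* = ∑ j, (ν restricted to V j) ⊗ δ_{y j}` is a coupling of `ν` and the discrete
measure `μ̂ = ∑ j, ν (V j) • δ_{y j}`, and its cost equals
`∑ j, ∫_{V j} c (x, y j) dν = ∫ min_j c (x, y j) dν`. -/
theorem voronoi_coupling_is_coupling_and_cost
    {X Y : Type*} [MeasurableSpace X] [MeasurableSpace Y] {k : ℕ}
    (ν : Measure X) [IsProbabilityMeasure ν]
    (y : Fin k → Y)
    (c : X × Y → ℝ) (hc_meas : Measurable c) (hc_nonneg : ∀ p, 0 ≤ c p)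
    (V : Fin k → Set X)
    (hV : ∀ j, V j = {x : X | ∀ m, m ≠ j → c (x, y j) < c (x, y m)})
    (hV_meas : ∀ j, MeasurableSet (V j))
    (hV_full : ν (⋃ j, V j) = 1)
    (γstar : Measure (X × Y))
    (hγstar : γstar = ∑ j, (ν.restrict (V j)).prod (Measure.dirac (y j))) :
    IsProbabilityMeasure γstar ∧
    γstar.map Prod.fst = ν ∧
    γstar.map Prod.snd = ∑ j, ν (V j) • Measure.dirac (y j) ∧
    (∫⁻ p, ENNReal.ofReal (c p) ∂γstar
      = ∑ j, ∫⁻ x in V j, ENNReal.ofReal (c (x, y j)) ∂ν) ∧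
    (∑ j, ∫⁻ x in V j, ENNReal.ofReal (c (x, y j)) ∂ν
      = ∫⁻ x, ⨅ j, ENNReal.ofReal (c (x, y j)) ∂ν) := by
  -- pairwise disjointness
  have hdisj : Pairwise (Function.onFun Disjoint V) := by
    intro i j hij
    rw [Function.onFun, Set.disjoint_left]
    intro x hxi hxj
    rw [hV i] at hxi
    rw [hV j] at hxj
    exact absurd (hxi j hij.symm) (not_lt.mpr (hxj i hij).le)
  -- ν restricted to the union is ν
  have hres : ν.restrict (⋃ j, V j) = ν := by
    apply Measure.restrict_eq_self_of_ae_mem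
    rw [MeasureTheory.ae_iff]
    have : ν ((⋃ j, V j)ᶜ) = 0 := by
      have := measure_compl (MeasurableSet.iUnion hV_meas) (measure_ne_top ν _)
      rw [hV_full, measure_univ] at this
      simpa using this
    exact this
  have hsum : ν.restrict (⋃ j, V j) = ∑ j, ν.restrict (V j) := by
    rw [Measure.restrict_iUnion hdisj hV_meas, Measure.sum_fintype]
  -- first marginal
  have hfst : γstar.map Prod.fst = ν := by
    rw [hγstar, ← Measure.sum_fintype,
      Measure.map_sum measurable_fst.aemeasurable]
    have : (fun j : Fin k =>
        ((ν.restrict (V j)).prod (Measure.dirac (y j))).map Prod.fst)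
          = fun j => ν.restrict (V j) := by
      funext j
      rw [Measure.map_fst_prod]
      simp
    rw [this, ← Measure.restrict_iUnion hdisj hV_meas, hres]
  -- probability
  have hprob : IsProbabilityMeasure γstar := by
    constructor
    have : γstar Set.univ = (γstar.map Prod.fst) Set.univ := by
      rw [Measure.map_apply measurable_fst MeasurableSet.univ]; rfl
    rw [this, hfst, measure_univ]
  -- second marginal
  have hsnd : γstar.map Prod.snd = ∑ j, ν (V j) • Measure.dirac (y j) := by
    rw [hγstar, ← Measure.sum_fintype,
      Measure.map_sum measurable_snd.aemeasurable, ← Measure.sum_fintype]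
    congr 1
    funext j
    rw [Measure.map_snd_prod]
    congr 1
    rw [Measure.restrict_apply MeasurableSet.univ, Set.univ_inter]
  -- cost identity 1
  have hf_meas : Measurable fun p : X × Y => ENNReal.ofReal (c p) :=
    ENNReal.measurable_ofReal.comp hc_meas
  have hcost1 : ∫⁻ p, ENNReal.ofReal (c p) ∂γstar
      = ∑ j, ∫⁻ x in V j, ENNReal.ofReal (c (x, y j)) ∂ν := by
    rw [hγstar, lintegral_finset_sum_measure]
    congr 1
    ext j
    rw [lintegral_prod _ hf_meas.aemeasurable]
    congr 1
    ext x
    exact lintegral_dirac' _ (hf_meas.comp measurable_prodMk_left)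
  -- cost identity 2
  have hcost2 : ∑ j, ∫⁻ x in V j, ENNReal.ofReal (c (x, y j)) ∂ν
      = ∫⁻ x, ⨅ j, ENNReal.ofReal (c (x, y j)) ∂ν := by
    have key : ∀ j : Fin k, ∀ x ∈ V j,
        ⨅ m, ENNReal.ofReal (c (x, y m)) = ENNReal.ofReal (c (x, y j)) := by
      intro j x hx
      rw [hV j] at hx
      refine le_antisymm (iInf_le _ j) (le_iInf fun m => ?_)
      rcases eq_or_ne m j with rfl | hm
      · exact le_rfl
      · exact ENNReal.ofReal_le_ofReal (hx m hm).le
    calc ∑ j, ∫⁻ x in V j, ENNReal.ofReal (c (x, y j)) ∂ν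
        = ∑ j, ∫⁻ x in V j, ⨅ m, ENNReal.ofReal (c (x, y m)) ∂ν := by
          refine Finset.sum_congr rfl fun j _ => ?_
          exact (setLIntegral_congr_fun (hV_meas j)
            (fun x hx => (key j x hx).symm))
      _ = ∫⁻ x in ⋃ j, V j, ⨅ m, ENNReal.ofReal (c (x, y m)) ∂ν := by
          rw [hsum, lintegral_finset_sum_measure]
      _ = ∫⁻ x, ⨅ m, ENNReal.ofReal (c (x, y m)) ∂ν := by rw [hres]
  exact ⟨hprob, hfst, hsnd, hcost1, hcost2⟩
end

section
/- (Theorem 2 of the paper: formal solution of the joint optimization over weights and transportation maps.) Let ν be a probability measure on a measurable space X, y₁,…,y_k points of Y, and c : X × Y → ℝ a nonnegative measurable cost, with measurable Voronoi cells V_j = {x : ∀ m ≠ j, c(x, y_j) < c(x, y_m)} satisfying ν(⋃_j V_j) = 1. Set ŵ_j = ν(V_j) and let γ* = ∑_j (ν restricted to V_j) ⊗ δ_{y_j}, a coupling of ν and μ̂ = ∑_j ŵ_j δ_{y_j}. Then γ* solves the joint minimization over weights and couplings: for every choice of nonnegative weights w'₁,…,w'_k summing to 1 and every coupling γ' of ν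 and ∑_j w'_j δ_{y_j}, one has ∫ c dγ' ≥ ∫ c dγ* = ∑_j ∫_{V_j} c(x, y_j) dν(x). -/
open MeasureTheory ENNReal

/-- Sections of a product-measurable set are constant on measurable neighborhoods
refining the atoms of finitely many points. -/
lemma exists_measurable_atoms {X Y : Type*} [MeasurableSpace X] [MeasurableSpace Y]
    {k : ℕ} (y : Fin k → Y) {B : Set (X × Y)} (hB : MeasurableSet B) :
    ∃ E : Fin k → Set Y, (∀ j, MeasurableSet (E j)) ∧ (∀ j, y j ∈ E j) ∧
      ∀ j, ∀ z ∈ E j, ∀ x : X, ((x, z) ∈ B ↔ (x, y j) ∈ B) := by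
  classical
  have hB' : MeasurableSet[MeasurableSpace.generateFrom
      (Set.image2 (· ×ˢ ·) { s : Set X | MeasurableSet s } { t : Set Y | MeasurableSet t })] B := by
    rw [generateFrom_prod]; exact hB
  refine MeasurableSpace.generateFrom_induction _
    (fun B _ => ∃ E : Fin k → Set Y, (∀ j, MeasurableSet (E j)) ∧ (∀ j, y j ∈ E j) ∧
      ∀ j, ∀ z ∈ E j, ∀ x : X, ((x, z) ∈ B ↔ (x, y j) ∈ B))
    (fun t ht _ => ?_) ?_ (fun t _ iht => ?_) (fun s hs ihs => ?_) B hB'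
  · obtain ⟨st, hst, u, hu, rfl⟩ := ht
    have hu' : MeasurableSet u := hu
    refine ⟨fun j => if y j ∈ u then u else uᶜ, fun j => ?_, fun j => ?_, fun j z hz x => ?_⟩
    · by_cases h : y j ∈ u <;> simp [h, hu', hu'.compl]
    · by_cases h : y j ∈ u <;> simp [h]
    · by_cases h : y j ∈ u
      · simp only [h, if_true] at hz
        simp [Set.mem_prod, hz, h]
      · simp only [h, if_false] at hz
        simp only [Set.mem_prod, h, and_false, iff_false, not_and]
        exact fun _ => hz
  · exact ⟨fun _ => Set.univ, fun _ => MeasurableSet.univ, fun _ => trivial,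
      fun _ _ _ _ => Iff.rfl⟩
  · obtain ⟨E, hE1, hE2, hE3⟩ := iht
    exact ⟨E, hE1, hE2, fun j z hz x => not_congr (hE3 j z hz x)⟩
  · choose E hE1 hE2 hE3 using ihs
    refine ⟨fun j => ⋂ n, E n j, fun j => MeasurableSet.iInter fun n => hE1 n j,
      fun j => Set.mem_iInter.2 fun n => hE2 n j, fun j z hz x => ?_⟩
    simp only [Set.mem_iUnion]
    exact exists_congr fun n => hE3 n j z (Set.mem_iInter.1 hz n) x

/-- (Theorem 2 of the paper.) With `ŵ j = ν (V j)` for the Voronoi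
cells `V j`, the coupling `γ* = ∑ j, (ν restricted to V j) ⊗ δ_{y j}` of `ν` and
`μ̂ = ∑ j, ŵ j • δ_{y j}` solves the joint minimization over weights and couplings:
for all nonnegative weights `w'` summing to one and every coupling `γ'` of `ν` and
`∑ j, w' j • δ_{y j}`, one has `∫ c dγ' ≥ ∫ c dγ* = ∑ j, ∫_{V j} c (x, y j) dν`. -/
theorem voronoi_coupling_solves_joint_minimization
    {X Y : Type*} [MeasurableSpace X] [MeasurableSpace Y] {k : ℕ}
    (ν : Measure X) [IsProbabilityMeasure ν]
    (y : Fin k → Y)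
    (c : X × Y → ℝ) (hc_meas : Measurable c) (hc_nonneg : ∀ p, 0 ≤ c p)
    (V : Fin k → Set X)
    (hV : ∀ j, V j = {x : X | ∀ m, m ≠ j → c (x, y j) < c (x, y m)})
    (hV_meas : ∀ j, MeasurableSet (V j))
    (hV_full : ν (⋃ j, V j) = 1)
    (γstar : Measure (X × Y))
    (hγstar : γstar = ∑ j, (ν.restrict (V j)).prod (Measure.dirac (y j))) :
    IsProbabilityMeasure γstar ∧
    γstar.map Prod.fst = ν ∧
    γstar.map Prod.snd = ∑ j, ν (V j) • Measure.dirac (y j) ∧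
    (∫⁻ p, ENNReal.ofReal (c p) ∂γstar
      = ∑ j, ∫⁻ x in V j, ENNReal.ofReal (c (x, y j)) ∂ν) ∧
    (∀ w' : Fin k → ℝ≥0∞, ∑ j, w' j = 1 →
      ∀ γ' : Measure (X × Y), IsProbabilityMeasure γ' →
        γ'.map Prod.fst = ν →
        γ'.map Prod.snd = ∑ j, w' j • Measure.dirac (y j) →
        ∫⁻ p, ENNReal.ofReal (c p) ∂γ' ≥ ∫⁻ p, ENNReal.ofReal (c p) ∂γstar) := by
  -- disjointness of Voronoi cells
  have hdisj : Pairwise (Function.onFun Disjoint V) := by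
    intro j m hjm
    rw [Function.onFun, Set.disjoint_left]
    intro x hxj hxm
    rw [hV j] at hxj
    rw [hV m] at hxm
    exact lt_asymm (hxj m (Ne.symm hjm)) (hxm j hjm)
  have hsum_meas : ν (⋃ j, V j) = ∑ j, ν (V j) := by
    rw [measure_iUnion hdisj hV_meas, tsum_fintype]
  -- the restriction of ν to the union is ν itself
  have hrestrict : ν.restrict (⋃ j, V j) = ν := by
    apply Measure.restrict_eq_self_of_ae_mem
    rw [ae_iff]
    have : ν (⋃ j, V j)ᶜ = 0 := by
      rw [measure_compl (MeasurableSet.iUnion hV_meas) (measure_ne_top _ _), hV_full,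
        measure_univ, tsub_self]
    exact this
  have hsum_restrict : ∑ j, ν.restrict (V j) = ν := by
    rw [← Measure.sum_fintype, ← Measure.restrict_iUnion hdisj hV_meas, hrestrict]
  -- probability measure
  have hprob : IsProbabilityMeasure γstar := by
    constructor
    rw [hγstar]
    rw [Measure.finset_sum_apply]
    have : ∀ j, ((ν.restrict (V j)).prod (Measure.dirac (y j))) Set.univ = ν (V j) := by
      intro j
      rw [← Set.univ_prod_univ, Measure.prod_prod, Measure.restrict_apply MeasurableSet.univ,
        Set.univ_inter, measure_univ, mul_one]
    simp_rw [this]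
    rw [← hsum_meas, hV_full]
  have hstar : ∫⁻ p, ENNReal.ofReal (c p) ∂γstar
      = ∑ j, ∫⁻ x in V j, ENNReal.ofReal (c (x, y j)) ∂ν := by
    rw [hγstar, lintegral_finset_sum_measure]
    congr 1
    ext j
    rw [lintegral_prod _ (hc_meas.ennreal_ofReal.aemeasurable)]
    congr 1
    ext x
    exact lintegral_dirac' (y j)
      ((hc_meas.comp (measurable_prodMk_left (x := x))).ennreal_ofReal)
  refine ⟨hprob, ?_, ?_, ?_, ?_⟩
  -- first marginal
  · rw [hγstar]
    have : (∑ j, (ν.restrict (V j)).prod (Measure.dirac (y j))).map Prod.fst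
        = ∑ j, ((ν.restrict (V j)).prod (Measure.dirac (y j))).map Prod.fst := by
      classical
      induction (Finset.univ : Finset (Fin k)) using Finset.induction with
      | empty => simp [Measure.map_zero]
      | insert _ _ hx ih => rw [Finset.sum_insert hx, Finset.sum_insert hx,
          Measure.map_add _ _ measurable_fst, ih]
    rw [this]
    have : ∀ j, ((ν.restrict (V j)).prod (Measure.dirac (y j))).map Prod.fst
        = ν.restrict (V j) := by
      intro j
      rw [Measure.map_fst_prod, measure_univ, one_smul]
    simp_rw [this, hsum_restrict]
  -- second marginal
  · rw [hγstar]
    have h1 : (∑ j, (ν.restrict (V j)).prod (Measure.dirac (y j))).map Prod.snd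
        = ∑ j, ((ν.restrict (V j)).prod (Measure.dirac (y j))).map Prod.snd := by
      classical
      induction (Finset.univ : Finset (Fin k)) using Finset.induction with
      | empty => simp [Measure.map_zero]
      | insert _ _ hx ih => rw [Finset.sum_insert hx, Finset.sum_insert hx,
          Measure.map_add _ _ measurable_snd, ih]
    rw [h1]
    congr 1
    ext j
    rw [Measure.map_snd_prod, Measure.restrict_apply MeasurableSet.univ, Set.univ_inter]
  -- value of the integral
  · exact hstar
  -- optimality
  · intro w' hw' γ' hγ'prob hfst hsnd
    -- the lower envelope
    set f : X → ℝ≥0∞ := fun x => ⨅ j, ENNReal.ofReal (c (x, y j)) with hf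
    have hfmeas : Measurable f := by
      apply Measurable.iInf
      intro j
      exact (hc_meas.comp (measurable_prodMk_right (y := y j))).ennreal_ofReal
    -- the bad set is null
    set B : Set (X × Y) := {p | ENNReal.ofReal (c p) < f p.1} with hBdef
    have hBmeas : MeasurableSet B :=
      measurableSet_lt hc_meas.ennreal_ofReal (hfmeas.comp measurable_fst)
    have hBsec : ∀ j, ∀ x : X, (x, y j) ∉ B := by
      intro j x hxy
      exact absurd (iInf_le (fun m => ENNReal.ofReal (c (x, y m))) j) (not_le.2 hxy)
    have hBnull : γ' B = 0 := by
      obtain ⟨E, hE1, hE2, hE3⟩ := exists_measurable_atoms y hBmeas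
      have hsub : B ⊆ Prod.snd ⁻¹' (⋃ j, E j)ᶜ := by
        rintro ⟨x, z⟩ hp
        simp only [Set.mem_preimage, Set.mem_compl_iff]
        intro hz
        obtain ⟨j, hj⟩ := Set.mem_iUnion.1 hz
        exact hBsec j x ((hE3 j z hj x).1 hp)
      have hT : MeasurableSet (⋃ j, E j) := MeasurableSet.iUnion hE1
      refine measure_mono_null hsub ?_
      rw [← Measure.map_apply measurable_snd hT.compl, hsnd, Measure.finset_sum_apply]
      apply Finset.sum_eq_zero
      intro j _
      rw [Measure.smul_apply, Measure.dirac_apply' _ hT.compl]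
      have hyj : y j ∈ ⋃ j, E j := Set.mem_iUnion.2 ⟨j, hE2 j⟩
      rw [Set.indicator_of_notMem (Set.notMem_compl_iff.2 hyj), smul_zero]
    -- lower bound by the envelope
    have hlow : ∫⁻ p, ENNReal.ofReal (c p) ∂γ' ≥ ∫⁻ p, f p.1 ∂γ' := by
      apply lintegral_mono_ae
      rw [Filter.eventually_iff, mem_ae_iff]
      have : {p : X × Y | ¬ f p.1 ≤ ENNReal.ofReal (c p)}ᶜᶜ = B := by
        ext p; simp [hBdef, not_le]
      refine measure_mono_null (fun p hp => ?_) hBnull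
      simp only [Set.mem_compl_iff, Set.mem_setOf_eq, not_le] at hp ⊢
      exact hp
    have henv : ∫⁻ p, f p.1 ∂γ' = ∫⁻ x, f x ∂ν := by
      rw [← hfst, lintegral_map hfmeas measurable_fst]
    -- the envelope integrates to the Voronoi value
    have hval : ∫⁻ x, f x ∂ν = ∑ j, ∫⁻ x in V j, ENNReal.ofReal (c (x, y j)) ∂ν := by
      conv_lhs => rw [← hrestrict]
      rw [lintegral_iUnion hV_meas hdisj f, tsum_fintype]
      congr 1
      ext j
      apply setLIntegral_congr_fun (hV_meas j)
      intro x hx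
      rw [hV j] at hx
      apply le_antisymm (iInf_le _ j)
      apply le_iInf
      intro m
      rcases eq_or_ne m j with rfl | hm
      · exact le_rfl
      · exact ENNReal.ofReal_le_ofReal (hx m hm).le
    rw [hstar, ← hval, ← henv]
    exact hlow
end

section
/- Let ν be a probability measure on a measurable space X, y₁,…,y_k points of Y, and c : X × Y → ℝ a nonnegative measurable cost, with measurable Voronoi cells V_j satisfying ν(⋃_j V_j) = 1. Then the semi-discrete optimal transport divergence between ν and the discrete measure μ̂ = ∑_j ν(V_j) δ_{y_j} — defined as the infimum of ∫ c dγ over all couplings γ of ν and μ̂ — equals ∫_X min_{1 ≤ j ≤ k} c(x, y_j) dν(x), and this infimum is attained by the Voronoi coupling γ* = ∑_j (ν restricted to V_j) ⊗ δ_{y_j}. -/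
open MeasureTheory ENNReal

section Aux

open MeasurableSpace

variable {X Y : Type*} [mX : MeasurableSpace X] [mY : MeasurableSpace Y]

/-- Monotonicity of the product σ-algebra in the second factor. -/
lemma aux_prod_mono_right {m₂ m₂' : MeasurableSpace Y} (h : m₂ ≤ m₂') :
    mX.prod m₂ ≤ mX.prod m₂' :=
  sup_le_sup le_rfl (comap_mono h)

/-- Every set in a product σ-algebra belongs to the product with a countably
generated sub-σ-algebra of the second factor. -/
lemma aux_exists_seq {E : Set (X × Y)} (hE : MeasurableSet E) :
    ∃ B : ℕ → Set Y, (∀ n, MeasurableSet (B n)) ∧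
      MeasurableSet[mX.prod (generateFrom (Set.range B))] E := by
  let m' : MeasurableSpace (X × Y) :=
    { MeasurableSet' := fun E => ∃ B : ℕ → Set Y, (∀ n, MeasurableSet (B n)) ∧
        MeasurableSet[mX.prod (generateFrom (Set.range B))] E
      measurableSet_empty := ⟨fun _ => ∅, fun _ => MeasurableSet.empty,
        @MeasurableSet.empty _ (mX.prod (generateFrom (Set.range fun _ : ℕ => (∅ : Set Y))))⟩
      measurableSet_compl := fun E ⟨B, hB, hEm⟩ => ⟨B, hB, hEm.compl⟩
      measurableSet_iUnion := fun E hE => by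
        choose B hB hEm using hE
        refine ⟨fun m => B m.unpair.1 m.unpair.2, fun m => hB _ _, ?_⟩
        refine MeasurableSet.iUnion fun n => ?_
        refine aux_prod_mono_right (generateFrom_le ?_) _ (hEm n)
        rintro _ ⟨i, rfl⟩
        exact measurableSet_generateFrom ⟨Nat.pair n i, by simp⟩ }
  suffices h : mX.prod mY ≤ m' from h _ hE
  refine sup_le ?_ ?_
  · rintro _ ⟨A, hA, rfl⟩
    exact ⟨fun _ => ∅, fun _ => MeasurableSet.empty,
      (le_sup_left : mX.comap Prod.fst ≤ _) _ ⟨A, hA, rfl⟩⟩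
  · rintro _ ⟨C, hC, rfl⟩
    exact ⟨fun _ => C, fun _ => hC,
      (le_sup_right : (generateFrom (Set.range fun _ : ℕ => C)).comap Prod.snd ≤ _) _
        ⟨C, measurableSet_generateFrom ⟨0, rfl⟩, rfl⟩⟩

/-- Membership in a set of the product σ-algebra with a countably generated second
factor only depends on the second coordinate through the generating sets. -/
lemma aux_slice_congr {B : ℕ → Set Y} {E : Set (X × Y)}
    (hE : MeasurableSet[mX.prod (generateFrom (Set.range B))] E)
    {y y' : Y} (h : ∀ n, y ∈ B n ↔ y' ∈ B n) (x : X) :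
    (x, y) ∈ E ↔ (x, y') ∈ E := by
  have hC : ∀ C : Set Y, MeasurableSet[generateFrom (Set.range B)] C → (y ∈ C ↔ y' ∈ C) := by
    intro C hCm
    refine generateFrom_induction (Set.range B)
      (fun C _ => (y ∈ C ↔ y' ∈ C)) ?_ ?_ ?_ ?_ C hCm
    · rintro _ ⟨n, rfl⟩ _; exact h n
    · simp
    · intro t _ ht; exact not_congr ht
    · intro s _ hs
      simp only [Set.mem_iUnion]
      exact exists_congr hs
  let m₃ : MeasurableSpace (X × Y) :=
    { MeasurableSet' := fun E => ∀ x : X, ((x, y) ∈ E ↔ (x, y') ∈ E)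
      measurableSet_empty := fun _ => Iff.rfl
      measurableSet_compl := fun E hE x => not_congr (hE x)
      measurableSet_iUnion := fun E hE x => by
        simp only [Set.mem_iUnion]
        exact exists_congr fun n => hE n x }
  have hle : mX.prod (generateFrom (Set.range B)) ≤ m₃ := by
    refine sup_le ?_ ?_
    · rintro _ ⟨A, _, rfl⟩ x; exact Iff.rfl
    · rintro _ ⟨C, hCm, rfl⟩ x; exact hC C hCm
  exact hle _ hE x

/-- `map` of a finite sum of measures. -/
lemma aux_map_finset_sum {α β : Type*} [MeasurableSpace α] [MeasurableSpace β]
    {ι : Type*} (s : Finset ι) (μ : ι → Measure α) {f : α → β} (hf : Measurable f) :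
    (∑ i ∈ s, μ i).map f = ∑ i ∈ s, (μ i).map f := by
  ext t ht
  rw [Measure.map_apply hf ht, Measure.finset_sum_apply, Measure.finset_sum_apply]
  exact Finset.sum_congr rfl fun i _ => (Measure.map_apply hf ht).symm

end Aux

/-- The semi-discrete optimal transport divergence between `ν` and
`μ̂ = ∑ j, ν (V j) • δ_{y j}` — the infimum of `∫ c dγ` over couplings `γ` of `ν` and
`μ̂` — equals `∫ min_j c (x, y j) dν`, and is attained by the Voronoi coupling
`γ* = ∑ j, (ν restricted to V j) ⊗ δ_{y j}`. -/
theorem semidiscrete_OT_divergence_eq_integral_min_cost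
    {X Y : Type*} [MeasurableSpace X] [MeasurableSpace Y] {k : ℕ}
    (ν : Measure X) [IsProbabilityMeasure ν]
    (y : Fin k → Y)
    (c : X × Y → ℝ) (hc_meas : Measurable c) (hc_nonneg : ∀ p, 0 ≤ c p)
    (V : Fin k → Set X)
    (hV : ∀ j, V j = {x : X | ∀ m, m ≠ j → c (x, y j) < c (x, y m)})
    (hV_meas : ∀ j, MeasurableSet (V j))
    (hV_full : ν (⋃ j, V j) = 1)
    (μhat : Measure Y) (hμhat : μhat = ∑ j, ν (V j) • Measure.dirac (y j))
    (γstar : Measure (X × Y))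
    (hγstar : γstar = ∑ j, (ν.restrict (V j)).prod (Measure.dirac (y j))) :
    (⨅ γ : {γ : Measure (X × Y) // IsProbabilityMeasure γ ∧
        γ.map Prod.fst = ν ∧ γ.map Prod.snd = μhat},
      ∫⁻ p, ENNReal.ofReal (c p) ∂(γ : Measure (X × Y)))
        = ∫⁻ x, ⨅ j, ENNReal.ofReal (c (x, y j)) ∂ν ∧
    (IsProbabilityMeasure γstar ∧ γstar.map Prod.fst = ν ∧ γstar.map Prod.snd = μhat) ∧
    ∫⁻ p, ENNReal.ofReal (c p) ∂γstar = ∫⁻ x, ⨅ j, ENNReal.ofReal (c (x, y j)) ∂ν := by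
  -- measurability facts
  have hFm : Measurable fun p : X × Y => ENNReal.ofReal (c p) := hc_meas.ennreal_ofReal
  have hGm : Measurable fun x : X => ⨅ j, ENNReal.ofReal (c (x, y j)) := by
    refine Measurable.iInf fun j => ?_
    exact (hc_meas.comp measurable_prodMk_right).ennreal_ofReal
  -- disjointness of the Voronoi cells
  have hdisj : Pairwise (Function.onFun Disjoint V) := by
    intro j m hjm
    rw [Function.onFun, Set.disjoint_left]
    intro x hxj hxm
    rw [hV j] at hxj
    rw [hV m] at hxm
    exact lt_asymm (hxj m (Ne.symm hjm)) (hxm j hjm)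
  -- ν restricted to the union of cells is ν
  have hUm : MeasurableSet (⋃ j, V j) := MeasurableSet.iUnion hV_meas
  have hae_mem : ∀ᵐ x ∂ν, x ∈ ⋃ j, V j := by
    have h0 : ν (⋃ j, V j)ᶜ = 0 := (prob_compl_eq_zero_iff hUm).mpr hV_full
    rw [ae_iff]
    simpa [Set.compl_def] using h0
  have hres : ν.restrict (⋃ j, V j) = ν := Measure.restrict_eq_self_of_ae_mem hae_mem
  have hsum_res : (∑ j, ν.restrict (V j)) = ν := by
    rw [← Measure.sum_fintype, ← Measure.restrict_iUnion hdisj hV_meas, hres]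
  -- γstar is a coupling
  have hfst : γstar.map Prod.fst = ν := by
    rw [hγstar, aux_map_finset_sum _ _ measurable_fst]
    simp only [Measure.map_fst_prod, measure_univ, one_smul]
    exact hsum_res
  have hsnd : γstar.map Prod.snd = μhat := by
    rw [hγstar, aux_map_finset_sum _ _ measurable_snd, hμhat]
    simp only [Measure.map_snd_prod, Measure.restrict_apply_univ]
  have hprob : IsProbabilityMeasure γstar := by
    constructor
    have h2 : (γstar.map Prod.fst) Set.univ = 1 := by rw [hfst]; exact measure_univ
    rwa [Measure.map_apply measurable_fst MeasurableSet.univ, Set.preimage_univ] at h2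
  -- on each cell, the minimum is achieved at the cell's site
  have hGx : ∀ (j : Fin k), ∀ x ∈ V j,
      (⨅ m, ENNReal.ofReal (c (x, y m))) = ENNReal.ofReal (c (x, y j)) := by
    intro j x hx
    rw [hV j] at hx
    refine le_antisymm (iInf_le _ j) (le_iInf fun m => ?_)
    rcases eq_or_ne m j with rfl | hm
    · exact le_rfl
    · exact ENNReal.ofReal_le_ofReal (hx m hm).le
  -- cost of the Voronoi coupling
  have hγcost : ∫⁻ p, ENNReal.ofReal (c p) ∂γstar
      = ∫⁻ x, ⨅ j, ENNReal.ofReal (c (x, y j)) ∂ν := by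
    rw [hγstar, lintegral_finset_sum_measure]
    have hj : ∀ j : Fin k,
        ∫⁻ p, ENNReal.ofReal (c p) ∂((ν.restrict (V j)).prod (Measure.dirac (y j)))
          = ∫⁻ x in V j, ⨅ m, ENNReal.ofReal (c (x, y m)) ∂ν := by
      intro j
      rw [Measure.prod_dirac, lintegral_map hFm measurable_prodMk_right]
      exact setLIntegral_congr_fun (hV_meas j)
        (fun x hx => (hGx j x hx).symm)
    calc (∑ j : Fin k,
          ∫⁻ p, ENNReal.ofReal (c p) ∂((ν.restrict (V j)).prod (Measure.dirac (y j))))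
        = ∑ j : Fin k, ∫⁻ x in V j, ⨅ m, ENNReal.ofReal (c (x, y m)) ∂ν :=
          Finset.sum_congr rfl fun j _ => hj j
      _ = ∫⁻ x in ⋃ j, V j, ⨅ m, ENNReal.ofReal (c (x, y m)) ∂ν := by
          rw [lintegral_iUnion hV_meas hdisj, tsum_fintype]
      _ = ∫⁻ x, ⨅ m, ENNReal.ofReal (c (x, y m)) ∂ν := by rw [hres]
  -- lower bound for an arbitrary coupling
  have hlow : ∀ γ : Measure (X × Y), γ.map Prod.fst = ν → γ.map Prod.snd = μhat →
      ∫⁻ x, ⨅ j, ENNReal.ofReal (c (x, y j)) ∂ν ≤ ∫⁻ p, ENNReal.ofReal (c p) ∂γ := by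
    intro γ hf hs
    set A : Set (X × Y) :=
      {p | ENNReal.ofReal (c p) < ⨅ j, ENNReal.ofReal (c (p.1, y j))} with hA
    have hAm : MeasurableSet A := measurableSet_lt hFm (hGm.comp measurable_fst)
    obtain ⟨B, hBm, hAm'⟩ := aux_exists_seq hAm
    set N : Set Y := ⋂ j, {y' | ∃ n, ¬ (y' ∈ B n ↔ y j ∈ B n)} with hN
    have hNm : MeasurableSet N := by
      refine MeasurableSet.iInter fun j => ?_
      have : {y' : Y | ∃ n, ¬ (y' ∈ B n ↔ y j ∈ B n)}
          = ⋃ n, {y' : Y | ¬ (y' ∈ B n ↔ y j ∈ B n)} := by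
        ext y'; simp
      rw [this]
      refine MeasurableSet.iUnion fun n => ?_
      by_cases h : y j ∈ B n
      · convert (hBm n).compl using 1
        ext y'; simp [h]
      · convert hBm n using 1
        ext y'; simp [h]
    have hμN : μhat N = 0 := by
      rw [hμhat, Measure.finset_sum_apply]
      refine Finset.sum_eq_zero fun j _ => ?_
      rw [Measure.smul_apply, Measure.dirac_apply' _ hNm]
      have hyj : y j ∉ N := by
        intro hyj
        obtain ⟨n, hn⟩ := Set.mem_iInter.mp hyj j
        exact hn Iff.rfl
      rw [Set.indicator_of_notMem hyj]
      simp
    have hsub : A ⊆ Prod.snd ⁻¹' N := by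
      rintro ⟨x, y'⟩ hxy
      simp only [Set.mem_preimage]
      rw [hN, Set.mem_iInter]
      intro j
      by_contra hcon
      simp only [Set.mem_setOf_eq, not_exists, not_not] at hcon
      have hmem : (x, y j) ∈ A := (aux_slice_congr hAm' hcon x).mp hxy
      have h2 : (⨅ m, ENNReal.ofReal (c (x, y m))) ≤ ENNReal.ofReal (c (x, y j)) :=
        iInf_le _ j
      rw [hA] at hmem
      exact absurd hmem (by simpa using h2)
    have hγA : γ A = 0 := by
      refine le_antisymm ?_ zero_le
      calc γ A ≤ γ (Prod.snd ⁻¹' N) := measure_mono hsub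
        _ = μhat N := by rw [← hs, Measure.map_apply measurable_snd hNm]
        _ = 0 := hμN
    have hae : ∀ᵐ p ∂γ, (⨅ j, ENNReal.ofReal (c (p.1, y j))) ≤ ENNReal.ofReal (c p) := by
      rw [ae_iff]
      have : {p : X × Y | ¬ (⨅ j, ENNReal.ofReal (c (p.1, y j))) ≤ ENNReal.ofReal (c p)}
          = A := by
        ext p; simp [hA, not_le]
      rw [this]
      exact hγA
    calc ∫⁻ x, ⨅ j, ENNReal.ofReal (c (x, y j)) ∂ν
        = ∫⁻ p, ⨅ j, ENNReal.ofReal (c (p.1, y j)) ∂γ := by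
          rw [← hf, lintegral_map hGm measurable_fst]
      _ ≤ ∫⁻ p, ENNReal.ofReal (c p) ∂γ := lintegral_mono_ae hae
  refine ⟨le_antisymm ?_ ?_, ⟨hprob, hfst, hsnd⟩, hγcost⟩
  · exact le_trans (iInf_le _ ⟨γstar, hprob, hfst, hsnd⟩) (le_of_eq hγcost)
  · exact le_iInf fun γ => hlow γ.1 γ.2.2.1 γ.2.2.2
end

section
/- Let ν be a probability measure on a measurable space X, y₁,…,y_k points of Y, and c : X × Y → ℝ a nonnegative measurable cost with measurable Voronoi cells V_j satisfying ν(⋃_j V_j) = 1. Then the doubly-infimized objective of the joint optimization problem, inf over nonnegative weights w summing to 1 and over families of probability measures (γ_j) on X satisfying the marginalization constraint ∑_j w_j γ_j = ν, of ∑_j w_j ∫ c(x, y_j) dγ_j(x), equals ∑_j ∫_{V_j} c(x, y_j) dν(x), and is attained by ŵ_j = ν(V_j) together with the normalized restrictions γ̂_j = ν|_{V_j}. -/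
open MeasureTheory ENNReal

/-- The doubly-infimized objective of the joint optimization problem —
infimum over nonnegative weights `w` summing to one and families of probability measures
`γ j` with `∑ j, w j • γ j = ν` of `∑ j, w j * ∫ c (x, y j) d(γ j)` — equals
`∑ j, ∫_{V j} c (x, y j) dν`, and is attained by `ŵ j = ν (V j)` together with the
normalized restrictions `γ̂ j = ν|_{V j}`. -/
theorem joint_optimization_solved_by_voronoi_restrictions
    {X Y : Type*} [MeasurableSpace X] {k : ℕ}
    (ν : Measure X) [IsProbabilityMeasure ν]
    (y : Fin k → Y)
    (c : X × Y → ℝ) (hc_meas : ∀ j, Measurable fun x => c (x, y j))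
    (hc_nonneg : ∀ p, 0 ≤ c p)
    (V : Fin k → Set X)
    (hV : ∀ j, V j = {x : X | ∀ m, m ≠ j → c (x, y j) < c (x, y m)})
    (hV_meas : ∀ j, MeasurableSet (V j))
    (hV_full : ν (⋃ j, V j) = 1)
    (γhat : Fin k → Measure X)
    (hγhat : ∀ j, γhat j = (ν (V j))⁻¹ • ν.restrict (V j)) :
    (⨅ p : {p : (Fin k → ℝ≥0∞) × (Fin k → Measure X) //
        (∑ j, p.1 j = 1) ∧ (∀ j, IsProbabilityMeasure (p.2 j)) ∧
        ∑ j, p.1 j • p.2 j = ν},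
      ∑ j, (p : (Fin k → ℝ≥0∞) × (Fin k → Measure X)).1 j *
        ∫⁻ x, ENNReal.ofReal (c (x, y j)) ∂((p : (Fin k → ℝ≥0∞) × (Fin k → Measure X)).2 j))
      = ∑ j, ∫⁻ x in V j, ENNReal.ofReal (c (x, y j)) ∂ν ∧
    ((∀ j, ν (V j) ≠ 0) →
      (∑ j, ν (V j) = 1) ∧
      (∀ j, IsProbabilityMeasure (γhat j)) ∧
      (∑ j, ν (V j) • γhat j = ν) ∧
      ∑ j, ν (V j) * ∫⁻ x, ENNReal.ofReal (c (x, y j)) ∂(γhat j)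
        = ∑ j, ∫⁻ x in V j, ENNReal.ofReal (c (x, y j)) ∂ν) := by
  -- disjointness of Voronoi cells
  have hdisj : ∀ j m : Fin k, j ≠ m → Disjoint (V j) (V m) := by
    intro j m hjm
    rw [Set.disjoint_left]
    intro x hxj hxm
    rw [hV j] at hxj
    rw [hV m] at hxm
    exact lt_asymm (hxj m (Ne.symm hjm)) (hxm j hjm)
  have hcompl : ν (⋃ j, V j)ᶜ = 0 := by
    rw [measure_compl (MeasurableSet.iUnion hV_meas) (measure_ne_top ν _), hV_full,
      measure_univ, tsub_self]
  have hsum_restrict : (∑ j, ν.restrict (V j)) = ν := by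
    ext s hs
    rw [Measure.finset_sum_apply]
    simp_rw [Measure.restrict_apply hs]
    rw [← tsum_fintype (L := SummationFilter.unconditional _), ← measure_iUnion (fun j m hjm => ((hdisj j m hjm).mono
        Set.inter_subset_right Set.inter_subset_right))
        (fun j => hs.inter (hV_meas j)),
      ← Set.inter_iUnion, measure_inter_conull hcompl]
  have hsum_meas : ∑ j, ν (V j) = 1 := by
    have := congrArg (fun μ : Measure X => μ Set.univ) hsum_restrict
    simpa [Measure.finset_sum_apply] using this
  have hvnetop : ∀ j, ν (V j) ≠ ⊤ := fun j => measure_ne_top ν _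
  -- the pointwise cell cost
  set G : X → ℝ≥0∞ := fun x =>
    ∑ m, (V m).indicator (fun x => ENNReal.ofReal (c (x, y m))) x with hG
  have hG_meas : Measurable G :=
    Finset.measurable_sum _ fun m _ =>
      ((hc_meas m).ennreal_ofReal).indicator (hV_meas m)
  have hG_mem : ∀ x m, x ∈ V m → G x = ENNReal.ofReal (c (x, y m)) := by
    intro x m hxm
    simp only [hG]
    rw [Finset.sum_eq_single m]
    · simp [Set.indicator_of_mem hxm]
    · intro m' _ hm'
      have : x ∉ V m' := fun hx => (hdisj m' m hm').le_bot ⟨hx, hxm⟩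
      simp [Set.indicator_of_notMem this]
    · simp
  have hG_le : ∀ (j : Fin k) x, G x ≤ ENNReal.ofReal (c (x, y j)) := by
    intro j x
    by_cases hx : ∃ m, x ∈ V m
    · obtain ⟨m, hm⟩ := hx
      rw [hG_mem x m hm]
      by_cases hmj : m = j
      · subst hmj; exact le_rfl
      · have := hm
        rw [hV m] at this
        exact ENNReal.ofReal_le_ofReal (this j (fun h => hmj h.symm)).le
    · push_neg at hx
      have : G x = 0 := by
        simp only [hG]
        exact Finset.sum_eq_zero fun m _ => Set.indicator_of_notMem (hx m) _
      simp [this]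
  have hG_int : ∫⁻ x, G x ∂ν = ∑ j, ∫⁻ x in V j, ENNReal.ofReal (c (x, y j)) ∂ν := by
    rw [hG, lintegral_finset_sum _ fun m _ =>
      ((hc_meas m).ennreal_ofReal).indicator (hV_meas m)]
    exact Finset.sum_congr rfl fun m _ => lintegral_indicator (hV_meas m) _
  -- value at the candidate in nonzero case
  have hval : ∀ j, ν (V j) ≠ 0 →
      ν (V j) * ∫⁻ x, ENNReal.ofReal (c (x, y j)) ∂((ν (V j))⁻¹ • ν.restrict (V j))
        = ∫⁻ x in V j, ENNReal.ofReal (c (x, y j)) ∂ν := by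
    intro j hj
    rw [lintegral_smul_measure, smul_eq_mul, ← mul_assoc, ENNReal.mul_inv_cancel hj (hvnetop j), one_mul]
  have hprob : ∀ j, ν (V j) ≠ 0 →
      IsProbabilityMeasure ((ν (V j))⁻¹ • ν.restrict (V j)) := by
    intro j hj
    constructor
    simp [Measure.restrict_apply_univ, ENNReal.inv_mul_cancel hj (hvnetop j)]
  have hsmul : ∀ j, ν (V j) ≠ 0 →
      ν (V j) • ((ν (V j))⁻¹ • ν.restrict (V j)) = ν.restrict (V j) := by
    intro j hj
    rw [smul_smul, ENNReal.mul_inv_cancel hj (hvnetop j), one_smul]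
  refine ⟨le_antisymm ?_ ?_, fun hne => ⟨hsum_meas, fun j => (hγhat j) ▸ hprob j (hne j),
    by rw [show (∑ j, ν (V j) • γhat j) = ∑ j, ν.restrict (V j) from
        Finset.sum_congr rfl fun j _ => by rw [hγhat j]; exact hsmul j (hne j),
      hsum_restrict],
    Finset.sum_congr rfl fun j _ => by rw [hγhat j]; exact hval j (hne j)⟩⟩
  · -- infimum ≤ value at candidate (with fix at null cells)
    set γ : Fin k → Measure X := fun j =>
      if h : ν (V j) = 0 then ν else (ν (V j))⁻¹ • ν.restrict (V j) with hγdef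
    have hfeas : (∑ j, (fun j => ν (V j)) j = 1) ∧ (∀ j, IsProbabilityMeasure (γ j)) ∧
        ∑ j, ν (V j) • γ j = ν := by
      refine ⟨hsum_meas, ?_, ?_⟩
      · intro j
        by_cases h : ν (V j) = 0
        · simp only [hγdef, dif_pos h]; exact ‹IsProbabilityMeasure ν›
        · simp only [hγdef, dif_neg h]; exact hprob j h
      · conv_rhs => rw [← hsum_restrict]
        refine Finset.sum_congr rfl fun j _ => ?_
        by_cases h : ν (V j) = 0
        · simp only [hγdef, dif_pos h, h, zero_smul]
          exact (Measure.restrict_eq_zero.mpr h).symm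
        · simp only [hγdef, dif_neg h]; exact hsmul j h
    refine le_trans (iInf_le _ ⟨⟨fun j => ν (V j), γ⟩, hfeas⟩) (le_of_eq ?_)
    refine Finset.sum_congr rfl fun j _ => ?_
    by_cases h : ν (V j) = 0
    · simp only [h, zero_mul]
      rw [Measure.restrict_eq_zero.mpr h, lintegral_zero_measure]
    · simp only [hγdef, dif_neg h]
      exact hval j h
  · -- lower bound
    refine le_iInf fun ⟨⟨w, γ⟩, hw, hpr, hmarg⟩ => ?_
    dsimp only
    rw [← hG_int]
    calc ∫⁻ x, G x ∂ν = ∫⁻ x, G x ∂(∑ j, w j • γ j) := by rw [hmarg]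
      _ = ∑ j, w j * ∫⁻ x, G x ∂(γ j) := by
          rw [lintegral_finset_sum_measure]
          exact Finset.sum_congr rfl fun j _ => lintegral_smul_measure _ _
      _ ≤ ∑ j, w j * ∫⁻ x, ENNReal.ofReal (c (x, y j)) ∂(γ j) :=
          Finset.sum_le_sum fun j _ =>
            mul_le_mul_right (lintegral_mono (hG_le j)) _
end
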